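/- Both halves of the polarization are isotropic for Ω: (a) if f and g are Laurent polynomials (elements of ℂ[X, X^{−1}] ⊂ ℂ(X)), then Ω(f,g) = 0; (b) if f and g are rational functions over ℂ that are regular at X = 0 and vanish at X = ∞ (i.e., each can be written as p/r with polynomials p, r satisfying r(0) ≠ 0 and deg p < deg r), then Ω(f,g) = 0. (This is the scalar version of the claim that K_+ = K[q,q^{−1}] and K_− = {f : f(0) ≠ ∞, f(∞) = 0} are Lagrangian subspaces forming a Lagrangian polarization K = K_+ ⊕ K_−.) -/

import Mathlib

/-- `Res_a(h)`: the coefficient of `(X−a)^{−1}` in the Laurent expansion of the rational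
function `h` at `a`. -/
noncomputable def ratRes (a : ℂ) (h : RatFunc ℂ) : ℂ :=
  ((RatFunc.laurent a h : RatFunc ℂ) : LaurentSeries ℂ).coeff (-1)

/-- `h(X⁻¹)`: the image of `h` under the automorphism of `ℂ(X)` sending `X` to `X⁻¹`. -/
noncomputable def invSubst (h : RatFunc ℂ) : RatFunc ℂ :=
  RatFunc.eval (RatFunc.C : ℂ →+* RatFunc ℂ) (RatFunc.X⁻¹) h

/-- The residue at infinity: `Res_∞(h) := −Res_0(X^{−2}·h(X^{−1}))`. -/
noncomputable def ratResInf (h : RatFunc ℂ) : ℂ :=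
  - ratRes 0 (RatFunc.X ^ (-2 : ℤ) * invSubst h)

/-- `Ω(f,g) := [Res_{q=0}+Res_{q=∞}] f(q)·g(q⁻¹)·dq/q`. -/
noncomputable def OmegaForm (f g : RatFunc ℂ) : ℂ :=
  ratRes 0 (f * invSubst g * RatFunc.X⁻¹) + ratResInf (f * invSubst g * RatFunc.X⁻¹)

/-!
Write `h = f(X)·g(X⁻¹)·X⁻¹`, so that `Ω(f,g) = Res_0 h + Res_∞ h`.

(a) For Laurent polynomials `f, g` the function `h` is again a Laurent polynomial, and
`Res_0 + Res_∞` kills every monomial `a·Xⁿ`: both residues vanish unless `n = -1`, where they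
are `a` and `-a`.

(b) Substituting `X ↦ X⁻¹` in `Res_∞` gives the antisymmetric form
`Ω(f,g) = Res_0 (f · X⁻¹g(X⁻¹)) - Res_0 (g · X⁻¹f(X⁻¹))`. If `g = p/r` with `deg p < deg r`,
then `g(X⁻¹)` is the quotient of the reversed polynomials, whose numerator is divisible by `X`;
so `X⁻¹g(X⁻¹)` is regular at `0`. Both products are therefore regular at `0` and have no
residue there.
-/

open scoped PowerSeries LaurentSeries

namespace RatFunc

open Polynomial

variable {K : Type*} [Field K]

lemma transcendental_inv_X : Transcendental K (X⁻¹ : RatFunc K) :=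
  fun h => transcendental_X (IsAlgebraic.inv_iff.mp h)

noncomputable def invX : RatFunc K →ₐ[K] RatFunc K :=
  liftAlgHom (aeval X⁻¹) (nonZeroDivisors_le_comap_nonZeroDivisors_of_injective _
    (transcendental_iff_injective.mp transcendental_inv_X))

lemma invX_div (p q : K[X]) :
    invX (algebraMap K[X] (RatFunc K) p / algebraMap _ _ q) = aeval X⁻¹ p / aeval X⁻¹ q :=
  liftAlgHom_apply_div _ _ _ _

lemma invX_algebraMap (p : K[X]) : invX (algebraMap K[X] (RatFunc K) p) = aeval X⁻¹ p := by
  simpa using invX_div p 1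

lemma invX_X : invX (X : RatFunc K) = X⁻¹ := by
  simpa using invX_algebraMap (K := K) Polynomial.X

lemma invX_C (a : K) : invX (C a) = C a := by
  rw [← algebraMap_eq_C, AlgHom.commutes]

lemma invX_invX (f : RatFunc K) : invX (invX f) = f := by
  have key (p : K[X]) : invX (invX (algebraMap K[X] (RatFunc K) p)) = algebraMap _ _ p := by
    rw [invX_algebraMap, ← aeval_algHom_apply, map_inv₀, invX_X, inv_inv,
      aeval_X_left_eq_algebraMap]
  rw [← num_div_denom f, map_div₀, map_div₀, key, key]

lemma invX_C_mul_X_zpow (a : K) (n : ℤ) : invX (C a * X ^ n) = C a * X ^ (-n) := by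
  rw [map_mul, invX_C, map_zpow₀, invX_X, inv_zpow, zpow_neg]

lemma sum_mul_invX_sum_mul_inv_X (s t : Finset ℤ) (a b : ℤ → K) :
    (∑ k ∈ s, C (a k) * X ^ k) * invX (∑ l ∈ t, C (b l) * X ^ l) * X⁻¹ =
      ∑ kl ∈ s ×ˢ t, C (a kl.1 * b kl.2) * X ^ (kl.1 - kl.2 - 1) := by
  simp only [map_sum, invX_C_mul_X_zpow, Finset.mul_sum, Finset.sum_mul, Finset.sum_product]
  rw [Finset.sum_comm]
  refine Finset.sum_congr rfl fun k _ => Finset.sum_congr rfl fun l _ => ?_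
  rw [map_mul, zpow_sub₀ X_ne_zero, zpow_sub₀ X_ne_zero, zpow_neg, zpow_one]
  ring

lemma aeval_inv_X_eq_div {p : K[X]} {N : ℕ} (hp : p.natDegree ≤ N) :
    aeval X⁻¹ p = algebraMap K[X] (RatFunc K) (p.reflect N) / X ^ N := by
  let _ : Invertible (X⁻¹ : RatFunc K) := invertibleOfNonzero (inv_ne_zero X_ne_zero)
  have h := eval₂_reflect_mul_pow (algebraMap K (RatFunc K)) X⁻¹ N p hp
  rw [invOf_eq_inv, inv_inv, ← aeval_def, ← aeval_def, aeval_X_left_eq_algebraMap] at h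
  rw [← h, inv_pow, div_eq_mul_inv]

lemma coe_algebraMap_polynomial (q : K[X]) :
    ((algebraMap K[X] (RatFunc K) q : RatFunc K) : K⸨X⸩) = ((q : K⟦X⟧) : K⸨X⸩) :=
  (coe_coe q).symm

lemma coe_C_mul_X_zpow (a : K) (n : ℤ) :
    ((C a * X ^ n : RatFunc K) : K⸨X⸩) = HahnSeries.single n a := by
  rw [map_mul, map_zpow₀, coe_X, ← single_zpow, ← algebraMap_C, coe_algebraMap_polynomial,
    Polynomial.coe_C, PowerSeries.coe_C, HahnSeries.C_apply, HahnSeries.single_mul_single,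
    zero_add, mul_one]

def IsRegularAtZero (f : RatFunc K) : Prop :=
  ∃ p r : K[X], r.eval 0 ≠ 0 ∧ f = algebraMap K[X] (RatFunc K) p / algebraMap _ _ r

lemma isRegularAtZero_div (p : K[X]) {r : K[X]} (hr : r.eval 0 ≠ 0) :
    IsRegularAtZero (algebraMap K[X] (RatFunc K) p / algebraMap _ _ r) :=
  ⟨p, r, hr, rfl⟩

lemma IsRegularAtZero.mul {f g : RatFunc K} (hf : IsRegularAtZero f) (hg : IsRegularAtZero g) :
    IsRegularAtZero (f * g) := by
  obtain ⟨p, r, hr, rfl⟩ := hf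
  obtain ⟨p', r', hr', rfl⟩ := hg
  refine ⟨p * p', r * r', by simp [hr, hr'], ?_⟩
  rw [div_mul_div_comm, map_mul, map_mul]

lemma IsRegularAtZero.coeff_coe_eq_zero {f : RatFunc K} (hf : IsRegularAtZero f) {n : ℤ}
    (hn : n < 0) : (f : K⸨X⸩).coeff n = 0 := by
  obtain ⟨p, r, hr, rfl⟩ := hf
  have hr0 : PowerSeries.constantCoeff (r : K⟦X⟧) ≠ 0 := by
    rwa [constantCoeff_coe, coeff_zero_eq_eval_zero]
  have hcoe : ((algebraMap K[X] (RatFunc K) p / algebraMap _ _ r : RatFunc K) : K⸨X⸩) =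
      ((p * (r : K⟦X⟧)⁻¹ : K⟦X⟧) : K⸨X⸩) := by
    have hinv : ((r : K⟦X⟧) : K⸨X⸩) * (((r : K⟦X⟧)⁻¹ : K⟦X⟧) : K⸨X⸩) = 1 := by
      rw [← PowerSeries.coe_mul, PowerSeries.mul_inv_cancel _ hr0, PowerSeries.coe_one]
    rw [map_div₀, coe_algebraMap_polynomial, coe_algebraMap_polynomial, PowerSeries.coe_mul,
      div_eq_mul_inv, inv_eq_of_mul_eq_one_right hinv]
  rw [hcoe, PowerSeries.coeff_coe, if_pos hn]

lemma isRegularAtZero_inv_X_mul_invX_div {p r : K[X]} (hdeg : p.degree < r.degree) :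
    IsRegularAtZero (X⁻¹ * invX (algebraMap K[X] (RatFunc K) p / algebraMap _ _ r)) := by
  have hr : r ≠ 0 := ne_zero_of_degree_gt hdeg
  have hpN : p.natDegree ≤ r.natDegree := natDegree_le_natDegree hdeg.le
  have hcoeff : (p.reflect r.natDegree).coeff 0 = 0 := by
    rw [coeff_reflect, revAt_le (Nat.zero_le _), Nat.sub_zero]
    exact coeff_eq_zero_of_degree_lt (by rwa [← degree_eq_natDegree hr])
  obtain ⟨A, hA⟩ := X_dvd_iff.mpr hcoeff
  refine ⟨A, r.reflect r.natDegree, ?_, ?_⟩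
  · rw [← coeff_zero_eq_eval_zero, coeff_reflect, revAt_le (Nat.zero_le _), Nat.sub_zero]
    exact leadingCoeff_ne_zero.mpr hr
  · have hR : algebraMap K[X] (RatFunc K) (r.reflect r.natDegree) ≠ 0 :=
      algebraMap_ne_zero (by rwa [Ne, reflect_eq_zero_iff])
    have hX : (X : RatFunc K) ≠ 0 := X_ne_zero
    rw [invX_div, aeval_inv_X_eq_div hpN, aeval_inv_X_eq_div le_rfl, hA, map_mul, algebraMap_X]
    field_simp

end RatFunc

open RatFunc

lemma invSubst_eq_invX (h : RatFunc ℂ) : invSubst h = invX h := by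
  rw [invSubst, RatFunc.eval, ← RatFunc.algebraMap_eq_C, ← Polynomial.aeval_def,
    ← Polynomial.aeval_def, ← invX_div, num_div_denom]

lemma ratRes_zero_eq_coeff (h : RatFunc ℂ) : ratRes 0 h = (h : ℂ⸨X⸩).coeff (-1) := by
  rw [ratRes, laurent_at_zero]

lemma ratRes_zero_C_mul_X_zpow (a : ℂ) (n : ℤ) :
    ratRes 0 (C a * X ^ n) = if n = -1 then a else 0 := by
  rw [ratRes_zero_eq_coeff, coe_C_mul_X_zpow, HahnSeries.coeff_single]
  simp only [eq_comm]

lemma ratResInf_C_mul_X_zpow (a : ℂ) (n : ℤ) :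
    ratResInf (C a * X ^ n) = if n = -1 then -a else 0 := by
  have h : (X : RatFunc ℂ) ^ (-2 : ℤ) * (C a * X ^ (-n)) = C a * X ^ (-2 - n) := by
    rw [mul_left_comm, ← zpow_add₀ X_ne_zero]; ring_nf
  rw [ratResInf, invSubst_eq_invX, invX_C_mul_X_zpow, h, ratRes_zero_C_mul_X_zpow]
  by_cases hn : n = -1 <;> simp [hn]
  omega

noncomputable def residueSum : RatFunc ℂ →+ ℂ where
  toFun h := ratRes 0 h + ratResInf h
  map_zero' := by simp [ratRes_zero_eq_coeff, ratResInf, invSubst_eq_invX]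
  map_add' f g := by
    simp only [ratRes_zero_eq_coeff, ratResInf, invSubst_eq_invX, map_add, mul_add,
      HahnSeries.coeff_add]
    ring

lemma residueSum_sum_C_mul_X_zpow {ι : Type*} (s : Finset ι) (a : ι → ℂ) (n : ι → ℤ) :
    residueSum (∑ i ∈ s, C (a i) * X ^ n i) = 0 := by
  rw [map_sum]
  refine Finset.sum_eq_zero fun i _ => ?_
  show ratRes 0 _ + ratResInf _ = 0
  rw [ratRes_zero_C_mul_X_zpow, ratResInf_C_mul_X_zpow]
  split_ifs <;> simp

lemma ratRes_zero_eq_zero {f : RatFunc ℂ} (hf : IsRegularAtZero f) : ratRes 0 f = 0 := by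
  rw [ratRes_zero_eq_coeff]
  exact hf.coeff_coe_eq_zero (by norm_num)

lemma OmegaForm_eq_sub (f g : RatFunc ℂ) :
    OmegaForm f g = ratRes 0 (f * (X⁻¹ * invX g)) - ratRes 0 (g * (X⁻¹ * invX f)) := by
  have h : X ^ (-2 : ℤ) * invX (f * invX g * X⁻¹) = g * (X⁻¹ * invX f) := by
    rw [map_mul, map_mul, invX_invX, map_inv₀, invX_X, inv_inv, zpow_neg, zpow_two]
    field_simp
  simp only [OmegaForm, ratResInf, invSubst_eq_invX, h]
  rw [sub_eq_add_neg, mul_assoc, mul_comm (invX g)]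

/-- Both halves of the polarization are isotropic for `Ω`:
(a) `Ω(f,g) = 0` whenever `f` and `g` are Laurent polynomials (here given by their
coefficients `c, d : ℤ →₀ ℂ`);
(b) `Ω(f,g) = 0` whenever `f` and `g` are rational functions regular at `X = 0` and
vanishing at `X = ∞`, i.e. of the form `p/r` with `r(0) ≠ 0` and `deg p < deg r`. -/
theorem stmt15 :
    (∀ c d : ℤ →₀ ℂ,
        OmegaForm (∑ k ∈ c.support, RatFunc.C (c k) * RatFunc.X ^ k)
          (∑ k ∈ d.support, RatFunc.C (d k) * RatFunc.X ^ k) = 0) ∧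
    (∀ p r p' r' : Polynomial ℂ, r.eval 0 ≠ 0 → r'.eval 0 ≠ 0 →
        p.degree < r.degree → p'.degree < r'.degree →
        OmegaForm
          (algebraMap (Polynomial ℂ) (RatFunc ℂ) p / algebraMap (Polynomial ℂ) (RatFunc ℂ) r)
          (algebraMap (Polynomial ℂ) (RatFunc ℂ) p' / algebraMap (Polynomial ℂ) (RatFunc ℂ) r')
          = 0) := by
  refine ⟨fun c d => ?_, fun p r p' r' hr hr' hdeg hdeg' => ?_⟩
  · have h := residueSum_sum_C_mul_X_zpow (c.support ×ˢ d.support) (fun kl => c kl.1 * d kl.2)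
      (fun kl => kl.1 - kl.2 - 1)
    rwa [← sum_mul_invX_sum_mul_inv_X, ← invSubst_eq_invX] at h
  · have hfg := (isRegularAtZero_div p hr).mul (isRegularAtZero_inv_X_mul_invX_div hdeg')
    have hgf := (isRegularAtZero_div p' hr').mul (isRegularAtZero_inv_X_mul_invX_div hdeg)
    rw [OmegaForm_eq_sub, ratRes_zero_eq_zero hfg, ratRes_zero_eq_zero hgf, sub_zero]
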